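/- Mass-flux equality of the kinetic scheme with reflections: with Gibbs functions M_i, M_{i+1}: ℝ → [0,∞) integrable with first moments, and potential barrier Δφ ∈ ℝ, define F⁻ = ∫_{ξ>0} ξM_i(ξ)dξ + ∫_{ξ<0, ξ²−2gΔφ<0} ξM_i(−ξ)dξ + ∫_{ξ<0, ξ²−2gΔφ>0} ξM_{i+1}(−√(ξ²−2gΔφ))dξ and F⁺ = ∫_{ξ<0} ξM_{i+1}(ξ)dξ + ∫_{ξ>0, ξ²+2gΔφ<0} ξM_{i+1}(−ξ)dξ + ∫_{ξ>0, ξ²+2gΔφ>0} ξM_i(√(ξ²+2gΔφ))dξ. Then F⁻ = F⁺. -/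

import Mathlib

open MeasureTheory Set Filter

lemma integ_aux {f : ℝ → ℝ} (hf : Continuous f) (hfs : HasCompactSupport f) :
    Integrable (fun x : ℝ => x * f x) :=
  (continuous_id.mul hf).integrable_of_hasCompactSupport (hfs.mul_left)

lemma refl_aux (f : ℝ → ℝ) (T : Set ℝ) :
    ∫ x in (fun y : ℝ => -y) ⁻¹' T, f (-x) = ∫ y in T, f y := by
  have A : MeasurableEmbedding fun x : ℝ => -x :=
    (Homeomorph.neg ℝ).isClosedEmbedding.measurableEmbedding
  have h := A.setIntegral_map (μ := volume) f T
  rw [Measure.map_neg_eq_self (volume : Measure ℝ)] at h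
  exact h.symm

lemma refl_Ioi (f : ℝ → ℝ) (s : ℝ) :
    ∫ x in Ioi s, x * f (-x) = - ∫ y in Iio (-s), y * f y := by
  have h := refl_aux (fun y => y * f y) (Iio (-s))
  have hp : (fun y : ℝ => -y) ⁻¹' Iio (-s) = Ioi s := by
    ext x; simp [neg_lt]
  rw [hp] at h
  rw [← h, ← integral_neg]
  congr 1 with x
  ring

lemma refl_Ioo (f : ℝ → ℝ) (s : ℝ) :
    ∫ x in Ioo (-s) 0, x * f (-x) = - ∫ y in Ioo 0 s, y * f y := by
  have h := refl_aux (fun y => y * f y) (Ioo 0 s)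
  have hp : (fun y : ℝ => -y) ⁻¹' Ioo 0 s = Ioo (-s) 0 := by
    ext x; simp [neg_lt, lt_neg, and_comm]
  rw [hp] at h
  rw [← h, ← integral_neg]
  congr 1 with x
  ring

lemma refl_Ioo' (f : ℝ → ℝ) (s : ℝ) :
    ∫ x in Ioo 0 s, x * f (-x) = - ∫ y in Ioo (-s) 0, y * f y := by
  have h := refl_aux (fun y => y * f y) (Ioo (-s) 0)
  have hp : (fun y : ℝ => -y) ⁻¹' Ioo (-s) 0 = Ioo 0 s := by
    ext x; simp [neg_lt, lt_neg, and_comm]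
  rw [hp] at h
  rw [← h, ← integral_neg]
  congr 1 with x
  ring

lemma refl_sqrt_Iio (f : ℝ → ℝ) (s b : ℝ) :
    ∫ y in Iio (-s), y * f (-Real.sqrt (y ^ 2 - b))
      = - ∫ x in Ioi s, x * f (-Real.sqrt (x ^ 2 - b)) := by
  have h := refl_aux (fun x => x * f (-Real.sqrt (x ^ 2 - b))) (Iio (-s))
  have hp : (fun y : ℝ => -y) ⁻¹' Iio (-s) = Ioi s := by
    ext x; simp [neg_lt]
  rw [hp] at h
  rw [← h, ← integral_neg]
  congr 1 with x
  rw [neg_pow]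
  ring_nf

lemma comp_support_aux {f : ℝ → ℝ} (hfs : HasCompactSupport f) (a : ℝ) :
    HasCompactSupport (fun x : ℝ => x * f (Real.sqrt (x ^ 2 + a))) := by
  obtain ⟨R, hR⟩ := hfs.isBounded.subset_closedBall 0
  set K : ℝ := Real.sqrt (R ^ 2 + |a|) with hK
  apply HasCompactSupport.intro (isCompact_Icc (a := -K) (b := K))
  intro x hx
  have hxK : K < |x| := by
    simp only [mem_Icc, not_and_or, not_le] at hx
    rcases hx with h | h
    · rw [abs_of_neg (by nlinarith [Real.sqrt_nonneg (R ^ 2 + |a|)])]; linarith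
    · rw [abs_of_pos (by nlinarith [Real.sqrt_nonneg (R ^ 2 + |a|)])]; linarith
  have hK2 : K ^ 2 = R ^ 2 + |a| := Real.sq_sqrt (by positivity)
  have hx2 : R ^ 2 + |a| < x ^ 2 := by nlinarith [sq_abs x, Real.sqrt_nonneg (R ^ 2 + |a|)]
  have hfz : f (Real.sqrt (x ^ 2 + a)) = 0 := by
    have hmem : Real.sqrt (x ^ 2 + a) ∉ tsupport f := by
      intro hmem
      have hle := hR hmem
      rw [Metric.mem_closedBall, Real.dist_eq, sub_zero,
        abs_of_nonneg (Real.sqrt_nonneg _)] at hle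
      have h2 : R ^ 2 < x ^ 2 + a := by
        cases' abs_cases a with h h <;> nlinarith
      have h3 : Real.sqrt (R ^ 2) < Real.sqrt (x ^ 2 + a) :=
        Real.sqrt_lt_sqrt (by positivity) h2
      rw [Real.sqrt_sq_eq_abs] at h3
      linarith [le_abs_self R]
    exact image_eq_zero_of_notMem_tsupport hmem
  rw [hfz, mul_zero]

lemma subst_aux {f : ℝ → ℝ} (hf : Continuous f) (hfs : HasCompactSupport f)
    {a c : ℝ} (hc : 0 ≤ c) (hca : 0 ≤ c ^ 2 + a) :
    ∫ ξ in Ioi c, ξ * f (Real.sqrt (ξ ^ 2 + a)) =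
      ∫ μ in Ioi (Real.sqrt (c ^ 2 + a)), μ * f μ := by
  set φ : ℝ → ℝ := fun x => Real.sqrt (x ^ 2 + a) with hφ
  set φ' : ℝ → ℝ := fun x => x / Real.sqrt (x ^ 2 + a) with hφ'
  set G : ℝ → ℝ := fun μ => μ * f μ with hG
  have hcontφ : Continuous φ :=
    Real.continuous_sqrt.comp ((continuous_pow 2).add continuous_const)
  have hGc : Continuous G := continuous_id.mul hf
  have hpos : ∀ x, c < x → 0 < x ^ 2 + a := by
    intro x hx
    nlinarith
  have hint : Integrable (fun x : ℝ => x * f (Real.sqrt (x ^ 2 + a))) :=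
    (continuous_id.mul (hf.comp hcontφ)).integrable_of_hasCompactSupport
      (comp_support_aux hfs a)
  have hft : Tendsto φ atTop atTop := by
    rw [tendsto_atTop_atTop]
    intro b
    refine ⟨|b| + |a| + 1, fun x hx => ?_⟩
    have h1 : b ^ 2 ≤ x ^ 2 + a := by
      have h0 : 0 ≤ |b| + |a| + 1 := by positivity
      have : (|b| + |a| + 1) ^ 2 ≤ x ^ 2 := by nlinarith
      nlinarith [abs_nonneg b, abs_nonneg a, le_abs_self b, le_abs_self a,
        neg_abs_le a, sq_abs b]
    calc b ≤ |b| := le_abs_self b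
      _ = Real.sqrt (b ^ 2) := (Real.sqrt_sq_eq_abs b).symm
      _ ≤ φ x := Real.sqrt_le_sqrt h1
  have hff' : ∀ x ∈ Ioi c, HasDerivWithinAt φ (φ' x) (Ioi x) x := by
    intro x hx
    have hxa : 0 < x ^ 2 + a := hpos x hx
    have hs : Real.sqrt (x ^ 2 + a) ≠ 0 := by
      rw [Real.sqrt_ne_zero']; exact hxa
    have hd : HasDerivAt φ (1 / (2 * Real.sqrt (x ^ 2 + a)) * (2 * x)) x := by
      have h1 : HasDerivAt (fun x : ℝ => x ^ 2 + a) (2 * x) x := by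
        simpa using (hasDerivAt_pow 2 x).add_const a
      exact (Real.hasDerivAt_sqrt hxa.ne').comp x h1
    have heq : 1 / (2 * Real.sqrt (x ^ 2 + a)) * (2 * x) = φ' x := by
      rw [hφ']; field_simp
    rw [heq] at hd
    exact hd.hasDerivWithinAt
  have heqae : (fun x : ℝ => x * f (Real.sqrt (x ^ 2 + a)))
      =ᵐ[volume.restrict (Ici c)] (fun x => (G ∘ φ) x * φ' x) := by
    rw [Filter.EventuallyEq, ae_restrict_iff' measurableSet_Ici]
    have hc0 : ∀ᵐ x : ℝ, x ≠ c := by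
      have h0 : (volume : Measure ℝ) {c} = 0 := measure_singleton c
      have := measure_eq_zero_iff_ae_notMem.mp h0
      filter_upwards [this] with x hx
      simpa using hx
    filter_upwards [hc0] with x hxc hxI
    have hxa : 0 < x ^ 2 + a := hpos x (lt_of_le_of_ne hxI (Ne.symm hxc))
    have hs : Real.sqrt (x ^ 2 + a) ≠ 0 := by
      rw [Real.sqrt_ne_zero']; exact hxa
    simp only [hG, hφ, hφ', Function.comp]
    field_simp
  have hg2 : IntegrableOn (fun x => (G ∘ φ) x * φ' x) (Ici c) :=
    (hint.integrableOn).congr heqae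
  have key := integral_comp_mul_deriv_Ioi (hcontφ.continuousOn) hft hff'
      (hGc.continuousOn) ((integ_aux hf hfs).integrableOn) hg2
  have hφc : φ c = Real.sqrt (c ^ 2 + a) := rfl
  rw [hφc] at key
  rw [← key]
  apply setIntegral_congr_fun measurableSet_Ioi
  intro x hx
  have hxa : 0 < x ^ 2 + a := hpos x hx
  have hs : Real.sqrt (x ^ 2 + a) ≠ 0 := by
    rw [Real.sqrt_ne_zero']; exact hxa
  simp only [hG, hφ, hφ', Function.comp]
  field_simp

theorem kinetic_mass_flux_equality
    (g : ℝ) (hg : 0 < g) (Δφ : ℝ)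
    (Mi Mi1 : ℝ → ℝ)
    (hMi : Continuous Mi) (hMi1 : Continuous Mi1)
    (hMinn : ∀ ξ, 0 ≤ Mi ξ) (hMi1nn : ∀ ξ, 0 ≤ Mi1 ξ)
    (hMis : HasCompactSupport Mi) (hMi1s : HasCompactSupport Mi1) :
    (∫ ξ in Set.Ioi (0 : ℝ), ξ * Mi ξ)
      + (∫ ξ in {ξ : ℝ | ξ < 0 ∧ ξ ^ 2 - 2 * g * Δφ < 0}, ξ * Mi (-ξ))
      + (∫ ξ in {ξ : ℝ | ξ < 0 ∧ ξ ^ 2 - 2 * g * Δφ > 0},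
          ξ * Mi1 (-Real.sqrt (ξ ^ 2 - 2 * g * Δφ)))
    = (∫ ξ in Set.Iio (0 : ℝ), ξ * Mi1 ξ)
      + (∫ ξ in {ξ : ℝ | 0 < ξ ∧ ξ ^ 2 + 2 * g * Δφ < 0}, ξ * Mi1 (-ξ))
      + (∫ ξ in {ξ : ℝ | 0 < ξ ∧ ξ ^ 2 + 2 * g * Δφ > 0},
          ξ * Mi (Real.sqrt (ξ ^ 2 + 2 * g * Δφ))) := by
  set a : ℝ := 2 * g * Δφ with hset_a
  have hIi : Integrable (fun x : ℝ => x * Mi x) := integ_aux hMi hMis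
  have hIi1 : Integrable (fun x : ℝ => x * Mi1 x) := integ_aux hMi1 hMi1s
  have hMin : Continuous (fun μ : ℝ => Mi1 (-μ)) := hMi1.comp continuous_neg
  have hMins : HasCompactSupport (fun μ : ℝ => Mi1 (-μ)) :=
    hMi1s.comp_isClosedEmbedding (Homeomorph.neg ℝ).isClosedEmbedding
  rcases le_or_gt 0 a with ha | ha
  · -- case a ≥ 0
    set s : ℝ := Real.sqrt a with hs
    have hs0 : 0 ≤ s := Real.sqrt_nonneg a
    have hs2 : s ^ 2 = a := Real.sq_sqrt ha
    -- set identifications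
    have E1 : {ξ : ℝ | ξ < 0 ∧ ξ ^ 2 - a < 0} = Ioo (-s) 0 := by
      ext x
      simp only [mem_setOf_eq, mem_Ioo]
      constructor
      · rintro ⟨h1, h2⟩
        refine ⟨?_, h1⟩
        by_contra h
        push_neg at h
        nlinarith
      · rintro ⟨h1, h2⟩
        exact ⟨h2, by nlinarith⟩
    have E2 : {ξ : ℝ | ξ < 0 ∧ ξ ^ 2 - a > 0} = Iio (-s) := by
      ext x
      simp only [mem_setOf_eq, mem_Iio, gt_iff_lt]
      constructor
      · rintro ⟨h1, h2⟩
        by_contra h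
        push_neg at h
        nlinarith
      · intro h
        constructor
        · linarith
        · nlinarith
    have E3 : {ξ : ℝ | 0 < ξ ∧ ξ ^ 2 + a < 0} = (∅ : Set ℝ) := by
      ext x
      simp only [mem_setOf_eq, mem_empty_iff_false, iff_false, not_and, not_lt]
      intro h
      nlinarith
    have E4 : {ξ : ℝ | 0 < ξ ∧ ξ ^ 2 + a > 0} = Ioi 0 := by
      ext x
      simp only [mem_setOf_eq, mem_Ioi, gt_iff_lt]
      constructor
      · exact fun h => h.1
      · intro h
        exact ⟨h, by nlinarith⟩
    rw [E1, E2, E3, E4]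
    -- B term
    have hB : ∫ x in Ioo (-s) 0, x * Mi (-x) = - ∫ y in Ioo 0 s, y * Mi y :=
      refl_Ioo Mi s
    -- split A
    have hA : ∫ x in Ioi (0:ℝ), x * Mi x
        = (∫ x in Ioo 0 s, x * Mi x) + ∫ x in Ioi s, x * Mi x := by
      rw [← integral_Ioc_eq_integral_Ioo,
        ← setIntegral_union Ioc_disjoint_Ioi_same measurableSet_Ioi
          hIi.integrableOn hIi.integrableOn, Ioc_union_Ioi_eq_Ioi hs0]
    -- C term
    have hC1 : ∫ ξ in Iio (-s), ξ * Mi1 (-Real.sqrt (ξ ^ 2 - a))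
        = - ∫ x in Ioi s, x * Mi1 (-Real.sqrt (x ^ 2 - a)) :=
      refl_sqrt_Iio Mi1 s a
    have hC2 : ∫ x in Ioi s, x * Mi1 (-Real.sqrt (x ^ 2 - a))
        = ∫ μ in Ioi (0:ℝ), μ * Mi1 (-μ) := by
      have h := subst_aux (a := -a) (c := s) hMin hMins hs0 (by nlinarith)
      beta_reduce at h
      simp only [← sub_eq_add_neg] at h
      rw [h]
      congr 1
      rw [show s ^ 2 - a = 0 by nlinarith, Real.sqrt_zero]
    have hC3 : ∫ μ in Ioi (0:ℝ), μ * Mi1 (-μ) = - ∫ y in Iio (0:ℝ), y * Mi1 y := by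
      have h := refl_Ioi Mi1 0
      rwa [neg_zero] at h
    -- C' term
    have hC' : ∫ ξ in Ioi (0:ℝ), ξ * Mi (Real.sqrt (ξ ^ 2 + a))
        = ∫ μ in Ioi s, μ * Mi μ := by
      have h := subst_aux (a := a) (c := 0) hMi hMis le_rfl (by nlinarith)
      rw [h]
      congr 1
      rw [show (0:ℝ) ^ 2 + a = a by ring]
    rw [hB, hC1, hC2, hC3, hA, hC']
    simp [Measure.restrict_empty]
    ring
  · -- case a < 0
    set s : ℝ := Real.sqrt (-a) with hs
    have hs0 : 0 ≤ s := Real.sqrt_nonneg _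
    have hs2 : s ^ 2 = -a := Real.sq_sqrt (by linarith)
    have E1 : {ξ : ℝ | ξ < 0 ∧ ξ ^ 2 - a < 0} = (∅ : Set ℝ) := by
      ext x
      simp only [mem_setOf_eq, mem_empty_iff_false, iff_false, not_and, not_lt]
      intro h
      nlinarith
    have E2 : {ξ : ℝ | ξ < 0 ∧ ξ ^ 2 - a > 0} = Iio 0 := by
      ext x
      simp only [mem_setOf_eq, mem_Iio, gt_iff_lt]
      constructor
      · exact fun h => h.1
      · intro h
        exact ⟨h, by nlinarith⟩
    have E3 : {ξ : ℝ | 0 < ξ ∧ ξ ^ 2 + a < 0} = Ioo 0 s := by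
      ext x
      simp only [mem_setOf_eq, mem_Ioo]
      constructor
      · rintro ⟨h1, h2⟩
        refine ⟨h1, ?_⟩
        by_contra h
        push_neg at h
        nlinarith
      · rintro ⟨h1, h2⟩
        exact ⟨h1, by nlinarith⟩
    have E4 : {ξ : ℝ | 0 < ξ ∧ ξ ^ 2 + a > 0} = Ioi s := by
      ext x
      simp only [mem_setOf_eq, mem_Ioi, gt_iff_lt]
      constructor
      · rintro ⟨h1, h2⟩
        by_contra h
        push_neg at h
        nlinarith
      · intro h
        exact ⟨by linarith, by nlinarith⟩
    rw [E1, E2, E3, E4]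
    -- C term
    have hC1 : ∫ ξ in Iio (0:ℝ), ξ * Mi1 (-Real.sqrt (ξ ^ 2 - a))
        = - ∫ x in Ioi (0:ℝ), x * Mi1 (-Real.sqrt (x ^ 2 - a)) := by
      have h := refl_sqrt_Iio Mi1 0 a
      rwa [neg_zero] at h
    have hC2 : ∫ x in Ioi (0:ℝ), x * Mi1 (-Real.sqrt (x ^ 2 - a))
        = ∫ μ in Ioi s, μ * Mi1 (-μ) := by
      have h := subst_aux (a := -a) (c := 0) hMin hMins le_rfl (by nlinarith)
      beta_reduce at h
      simp only [← sub_eq_add_neg] at h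
      rw [h]
      congr 1
      rw [show (0:ℝ) ^ 2 - a = -a by ring]
    have hC3 : ∫ μ in Ioi s, μ * Mi1 (-μ) = - ∫ y in Iio (-s), y * Mi1 y :=
      refl_Ioi Mi1 s
    -- B' term
    have hB' : ∫ x in Ioo 0 s, x * Mi1 (-x) = - ∫ y in Ioo (-s) 0, y * Mi1 y :=
      refl_Ioo' Mi1 s
    -- split A'
    have hA' : ∫ x in Iio (0:ℝ), x * Mi1 x
        = (∫ x in Iio (-s), x * Mi1 x) + ∫ x in Ioo (-s) 0, x * Mi1 x := by
      rw [← integral_Ico_eq_integral_Ioo,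
        ← setIntegral_union ((Iio_disjoint_Ici le_rfl).mono_right Ico_subset_Ici_self)
          measurableSet_Ico hIi1.integrableOn hIi1.integrableOn,
        Iio_union_Ico_eq_Iio (by linarith)]
    -- C' term
    have hC' : ∫ ξ in Ioi s, ξ * Mi (Real.sqrt (ξ ^ 2 + a))
        = ∫ μ in Ioi (0:ℝ), μ * Mi μ := by
      have h := subst_aux (a := a) (c := s) hMi hMis hs0 (by nlinarith)
      rw [h]
      congr 1
      rw [show s ^ 2 + a = 0 by nlinarith, Real.sqrt_zero]
    rw [hC1, hC2, hC3, hB', hA', hC']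
    simp [Measure.restrict_empty]
    ring
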